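/- Let λ > 0 and let b_n > 0 solve √(π/2) b_n exp(b_n²/2) = n, and set a_n = 1/b_n. Then for every real x, n(1 - F_λ(a_n x + b_n)) → e^{-x} as n → ∞, where F_λ is the skew-normal cdf with parameter λ. -/

import Mathlib

/-!
Put `t = b⁻¹x + b`. The tail `1 - F_λ(t) = ∫_t^∞ 2φΦ(λ·)` lies between `2Φ(λt)(1 - Φ(t))` and
`2(1 - Φ(t))`, and Mills' ratio gives `1 - Φ(t) ~ φ(t)/t`; since `Φ(λt) → 1`, this yields
`1 - F_λ(t) ~ 2φ(t)/t`. The normalisation of `b` is exactly the one for which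
`√(π/2) b e^{b²/2} · 2φ(t)/t = e^{-x - x²/(2b²)} / (1 + x/b²)`, and this tends to `e^{-x}`.
-/

open Real MeasureTheory Filter

noncomputable def stdPhi (x : ℝ) : ℝ := (Real.sqrt (2 * Real.pi))⁻¹ * Real.exp (-x ^ 2 / 2)

noncomputable def stdCdf (x : ℝ) : ℝ := ∫ t in Set.Iic x, stdPhi t

noncomputable def snCdf (l x : ℝ) : ℝ := ∫ t in Set.Iic x, 2 * stdPhi t * stdCdf (l * t)

open Set Topology

lemma stdPhi_eq_gaussianPDFReal : stdPhi = ProbabilityTheory.gaussianPDFReal 0 1 := by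
  ext x
  simp [stdPhi, ProbabilityTheory.gaussianPDFReal]

lemma stdPhi_pos (x : ℝ) : 0 < stdPhi x := by
  rw [stdPhi_eq_gaussianPDFReal]
  exact ProbabilityTheory.gaussianPDFReal_pos 0 1 x one_ne_zero

lemma integrable_stdPhi : Integrable stdPhi := by
  rw [stdPhi_eq_gaussianPDFReal]
  exact ProbabilityTheory.integrable_gaussianPDFReal 0 1

lemma integral_stdPhi : ∫ x, stdPhi x = 1 := by
  rw [stdPhi_eq_gaussianPDFReal]
  exact ProbabilityTheory.integral_gaussianPDFReal_eq_one 0 one_ne_zero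

lemma stdPhi_neg (x : ℝ) : stdPhi (-x) = stdPhi x := by
  simp [stdPhi]

lemma hasDerivAt_stdPhi (x : ℝ) : HasDerivAt stdPhi (-x * stdPhi x) x := by
  have h := (hasDerivAt_pow 2 x).neg.div_const 2
  norm_num at h
  exact (h.exp.const_mul _).congr_deriv (by simp only [stdPhi]; ring)

lemma tendsto_stdPhi_atTop : Tendsto stdPhi atTop (𝓝 0) := by
  have h : Tendsto (fun x : ℝ => -x ^ 2 / 2) atTop atBot :=
    (tendsto_neg_atTop_atBot.comp (tendsto_pow_atTop two_ne_zero)).atBot_div_const two_pos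
  have := (tendsto_exp_atBot.comp h).const_mul (√(2 * π))⁻¹
  rwa [mul_zero] at this

lemma tendsto_stdPhi_div_self_atTop : Tendsto (fun x => stdPhi x / x) atTop (𝓝 0) := by
  simpa [div_eq_mul_inv] using tendsto_stdPhi_atTop.mul tendsto_inv_atTop_zero

lemma one_sub_stdCdf (x : ℝ) : 1 - stdCdf x = ∫ t in Ioi x, stdPhi t := by
  rw [← integral_stdPhi, ← intervalIntegral.integral_Iic_add_Ioi integrable_stdPhi.integrableOn
    integrable_stdPhi.integrableOn, stdCdf, add_sub_cancel_left]

lemma stdCdf_neg (x : ℝ) : stdCdf (-x) = 1 - stdCdf x := by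
  rw [one_sub_stdCdf, stdCdf, ← integral_comp_neg_Ioi]
  simp only [stdPhi_neg]

lemma stdCdf_nonneg (x : ℝ) : 0 ≤ stdCdf x :=
  setIntegral_nonneg measurableSet_Iic fun t _ => (stdPhi_pos t).le

lemma stdCdf_le_one (x : ℝ) : stdCdf x ≤ 1 := by
  have h : 0 ≤ 1 - stdCdf x := by
    rw [one_sub_stdCdf]
    exact setIntegral_nonneg measurableSet_Ioi fun t _ => (stdPhi_pos t).le
  linarith

lemma stdCdf_mono : Monotone stdCdf := fun _ _ h =>
  setIntegral_mono_set integrable_stdPhi.integrableOn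
    (Eventually.of_forall fun t => (stdPhi_pos t).le) (Iic_subset_Iic.2 h).eventuallyLE

-- Both Mills-ratio bounds integrate a derivative over `(t, ∞)`:
-- `(-φ)' = uφ` and `(-φ/u)' = (1 + u⁻²)φ`.
lemma one_sub_stdCdf_le {t : ℝ} (ht : 0 < t) : 1 - stdCdf t ≤ stdPhi t / t := by
  have hderiv : ∀ u ∈ Ici t, HasDerivAt (fun u => -stdPhi u) (u * stdPhi u) u :=
    fun u _ => (hasDerivAt_stdPhi u).neg.congr_deriv (by ring)
  have hnonneg : ∀ u ∈ Ioi t, 0 ≤ u * stdPhi u :=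
    fun u hu => mul_nonneg (ht.trans hu).le (stdPhi_pos u).le
  have hlim : Tendsto (fun u => -stdPhi u) atTop (𝓝 0) := by
    simpa using tendsto_stdPhi_atTop.neg
  have hint := integrableOn_Ioi_deriv_of_nonneg' hderiv hnonneg hlim
  have hval := integral_Ioi_of_hasDerivAt_of_nonneg' hderiv hnonneg hlim
  rw [one_sub_stdCdf, le_div_iff₀ ht, ← integral_mul_const]
  calc ∫ u in Ioi t, stdPhi u * t ≤ ∫ u in Ioi t, u * stdPhi u :=
        setIntegral_mono_on (integrable_stdPhi.integrableOn.mul_const t) hint measurableSet_Ioi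
          fun u hu => by nlinarith [stdPhi_pos u, mem_Ioi.1 hu]
    _ = stdPhi t := by rw [hval]; ring

lemma stdPhi_div_le {t : ℝ} (ht : 0 < t) : stdPhi t / t ≤ (1 + t⁻¹ ^ 2) * (1 - stdCdf t) := by
  have hderiv : ∀ u ∈ Ici t,
      HasDerivAt (fun u => -(stdPhi u / u)) ((1 + u⁻¹ ^ 2) * stdPhi u) u := by
    intro u hu
    have hu : u ≠ 0 := (ht.trans_le hu).ne'
    exact ((hasDerivAt_stdPhi u).div (hasDerivAt_id u) hu).neg.congr_deriv
      (by simp only [id]; field_simp; ring)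
  have hnonneg : ∀ u ∈ Ioi t, 0 ≤ (1 + u⁻¹ ^ 2) * stdPhi u :=
    fun u _ => by positivity [stdPhi_pos u]
  have hlim : Tendsto (fun u => -(stdPhi u / u)) atTop (𝓝 0) := by
    simpa using tendsto_stdPhi_div_self_atTop.neg
  have hint := integrableOn_Ioi_deriv_of_nonneg' hderiv hnonneg hlim
  have hval := integral_Ioi_of_hasDerivAt_of_nonneg' hderiv hnonneg hlim
  rw [one_sub_stdCdf, ← integral_const_mul]
  calc stdPhi t / t = ∫ u in Ioi t, (1 + u⁻¹ ^ 2) * stdPhi u := by rw [hval]; ring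
    _ ≤ ∫ u in Ioi t, (1 + t⁻¹ ^ 2) * stdPhi u :=
        setIntegral_mono_on hint (integrable_stdPhi.integrableOn.const_mul _) measurableSet_Ioi
          fun u hu => by
            have : u⁻¹ ≤ t⁻¹ := inv_anti₀ ht (mem_Ioi.1 hu).le
            have : 0 ≤ u⁻¹ := inv_nonneg.2 (ht.trans hu).le
            gcongr; exact (stdPhi_pos u).le

lemma tendsto_stdCdf_atTop : Tendsto stdCdf atTop (𝓝 1) := by
  have h : Tendsto (fun t => 1 - stdCdf t) atTop (𝓝 0) :=
    tendsto_of_tendsto_of_tendsto_of_le_of_le' tendsto_const_nhds tendsto_stdPhi_div_self_atTop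
      (Eventually.of_forall fun t => by linarith [stdCdf_le_one t])
      ((eventually_gt_atTop 0).mono fun t ht => one_sub_stdCdf_le ht)
  simpa using (tendsto_const_nhds (x := (1 : ℝ))).sub h

lemma tendsto_one_sub_stdCdf_div_atTop :
    Tendsto (fun t => (1 - stdCdf t) / (stdPhi t / t)) atTop (𝓝 1) := by
  have hlow : Tendsto (fun t : ℝ => (1 + t⁻¹ ^ 2)⁻¹) atTop (𝓝 1) := by
    simpa using (((tendsto_inv_atTop_zero (𝕜 := ℝ)).pow 2).const_add 1).inv₀ (by norm_num)
  refine tendsto_of_tendsto_of_tendsto_of_le_of_le' hlow tendsto_const_nhds ?_ ?_ <;>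
    filter_upwards [eventually_gt_atTop 0] with t ht <;>
    have hphi : 0 < stdPhi t / t := div_pos (stdPhi_pos t) ht
  · rw [le_div_iff₀ hphi, inv_mul_le_iff₀ (by positivity)]
    exact stdPhi_div_le ht
  · rw [div_le_one hphi]
    exact one_sub_stdCdf_le ht

noncomputable def snPdf (l t : ℝ) : ℝ := 2 * stdPhi t * stdCdf (l * t)

lemma snPdf_nonneg (l t : ℝ) : 0 ≤ snPdf l t :=
  mul_nonneg (mul_nonneg zero_le_two (stdPhi_pos t).le) (stdCdf_nonneg _)

lemma snPdf_le (l t : ℝ) : snPdf l t ≤ 2 * stdPhi t :=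
  mul_le_of_le_one_right (mul_nonneg zero_le_two (stdPhi_pos t).le) (stdCdf_le_one _)

lemma integrable_snPdf (l : ℝ) : Integrable (snPdf l) := by
  refine (integrable_stdPhi.const_mul 2).mono' ?_ (Eventually.of_forall fun t => ?_)
  · exact (integrable_stdPhi.aestronglyMeasurable.const_mul 2).mul
      (stdCdf_mono.measurable.comp (measurable_const_mul l)).aestronglyMeasurable
  · rw [Real.norm_of_nonneg (snPdf_nonneg l t)]
    exact snPdf_le l t

-- `t ↦ -t` turns `2φ(t)Φ(λt)` into `2φ(t)(1 - Φ(λt))`, so the total mass `I` satisfies `I = 2 - I`.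
lemma integral_snPdf (l : ℝ) : ∫ t, snPdf l t = 1 := by
  have hneg : ∫ t, snPdf l t = ∫ t, (2 * stdPhi t - snPdf l t) := by
    rw [← integral_neg_eq_self]
    congr 1 with t
    simp only [snPdf, stdPhi_neg, mul_neg, stdCdf_neg]
    ring
  rw [integral_sub (integrable_stdPhi.const_mul 2) (integrable_snPdf l), integral_const_mul,
    integral_stdPhi] at hneg
  linarith

lemma one_sub_snCdf (l x : ℝ) : 1 - snCdf l x = ∫ t in Ioi x, snPdf l t := by
  rw [← integral_snPdf l, ← intervalIntegral.integral_Iic_add_Ioi (b := x)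
    (integrable_snPdf l).integrableOn (integrable_snPdf l).integrableOn]
  exact add_sub_cancel_left _ _

lemma one_sub_snCdf_le (l x : ℝ) : 1 - snCdf l x ≤ 2 * (1 - stdCdf x) := by
  rw [one_sub_snCdf, one_sub_stdCdf, ← integral_const_mul]
  exact setIntegral_mono (integrable_snPdf l).integrableOn
    (integrable_stdPhi.integrableOn.const_mul 2) (snPdf_le l)

lemma stdCdf_mul_le_one_sub_snCdf {l : ℝ} (hl : 0 ≤ l) (x : ℝ) :
    2 * stdCdf (l * x) * (1 - stdCdf x) ≤ 1 - snCdf l x := by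
  rw [one_sub_snCdf, one_sub_stdCdf, ← integral_const_mul]
  refine setIntegral_mono_on (integrable_stdPhi.integrableOn.const_mul _)
    (integrable_snPdf l).integrableOn measurableSet_Ioi fun t ht => ?_
  have : stdCdf (l * x) ≤ stdCdf (l * t) := stdCdf_mono (by nlinarith [mem_Ioi.1 ht])
  simp only [snPdf]
  nlinarith [stdPhi_pos t]

lemma tendsto_one_sub_snCdf_div_atTop {l : ℝ} (hl : 0 < l) :
    Tendsto (fun t => (1 - snCdf l t) / (2 * (stdPhi t / t))) atTop (𝓝 1) := by
  have hlow := (tendsto_stdCdf_atTop.comp (tendsto_id.const_mul_atTop hl)).mul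
    tendsto_one_sub_stdCdf_div_atTop
  rw [mul_one] at hlow
  refine tendsto_of_tendsto_of_tendsto_of_le_of_le' hlow tendsto_one_sub_stdCdf_div_atTop ?_ ?_ <;>
    filter_upwards [eventually_gt_atTop 0] with t ht <;>
    have hphi : 0 < stdPhi t / t := div_pos (stdPhi_pos t) ht
  · rw [le_div_iff₀ (by positivity)]
    calc stdCdf (l * t) * ((1 - stdCdf t) / (stdPhi t / t)) * (2 * (stdPhi t / t))
        = 2 * stdCdf (l * t) * (1 - stdCdf t) := by field_simp [(stdPhi_pos t).ne']
      _ ≤ 1 - snCdf l t := stdCdf_mul_le_one_sub_snCdf hl.le t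
  · rw [div_le_div_iff₀ (by positivity) hphi]
    nlinarith [one_sub_snCdf_le l t]

lemma mul_two_mul_stdPhi_div {b : ℝ} (hb : 0 < b) (x : ℝ) :
    √(π / 2) * b * exp (b ^ 2 / 2) * (2 * (stdPhi (b⁻¹ * x + b) / (b⁻¹ * x + b)))
      = exp (-x - (b⁻¹ * x) ^ 2 / 2) / (1 + b⁻¹ ^ 2 * x) := by
  have hsqrt : √(2 * π) = 2 * √(π / 2) := by
    rw [show 2 * π = 2 ^ 2 * (π / 2) by ring, sqrt_mul (by positivity), sqrt_sq zero_le_two]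
  have hexp : exp (b ^ 2 / 2) * exp (-(b⁻¹ * x + b) ^ 2 / 2) = exp (-x - (b⁻¹ * x) ^ 2 / 2) := by
    rw [← exp_add]
    congr 1
    field_simp
    ring
  rw [stdPhi, hsqrt, ← hexp]
  field_simp
  ring

lemma tendsto_exp_div_atTop (x : ℝ) :
    Tendsto (fun b : ℝ => exp (-x - (b⁻¹ * x) ^ 2 / 2) / (1 + b⁻¹ ^ 2 * x)) atTop
      (𝓝 (exp (-x))) := by
  have hcont : ContinuousAt (fun u : ℝ => exp (-x - (u * x) ^ 2 / 2) / (1 + u ^ 2 * x)) 0 :=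
    ContinuousAt.div (by fun_prop) (by fun_prop) (by simp)
  simpa [Function.comp_def] using hcont.tendsto.comp tendsto_inv_atTop_zero

lemma tendsto_mul_one_sub_snCdf {l : ℝ} (hl : 0 < l) (x : ℝ) :
    Tendsto (fun b => √(π / 2) * b * exp (b ^ 2 / 2) * (1 - snCdf l (b⁻¹ * x + b))) atTop
      (𝓝 (exp (-x))) := by
  have ht : Tendsto (fun b : ℝ => b⁻¹ * x + b) atTop atTop := by
    simpa using (tendsto_inv_atTop_zero.mul_const x).add_atTop tendsto_id
  have h := ((tendsto_one_sub_snCdf_div_atTop hl).comp ht).mul (tendsto_exp_div_atTop x)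
  rw [one_mul] at h
  refine h.congr' ?_
  filter_upwards [eventually_gt_atTop 0, ht.eventually_gt_atTop 0] with b hb htb
  have hq : 2 * (stdPhi (b⁻¹ * x + b) / (b⁻¹ * x + b)) ≠ 0 :=
    (mul_pos two_pos (div_pos (stdPhi_pos _) htb)).ne'
  rw [Function.comp_apply, ← mul_two_mul_stdPhi_div hb]
  generalize 2 * (stdPhi (b⁻¹ * x + b) / (b⁻¹ * x + b)) = q at hq ⊢
  field_simp

lemma tendsto_atTop_of_monotoneOn_comp {α : Type*} {f : Filter α} {g : ℝ → ℝ}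
    (hg : MonotoneOn g (Ici 0)) {b : α → ℝ} (hb : ∀ᶠ n in f, 0 ≤ b n)
    (h : Tendsto (g ∘ b) f atTop) : Tendsto b f atTop := by
  refine tendsto_atTop.2 fun M => ?_
  filter_upwards [h.eventually_gt_atTop (g (max M 0)), hb] with n hgn hbn
  by_contra! hlt
  exact (hg hbn (le_max_right M 0) (hlt.le.trans (le_max_left M 0))).not_gt hgn

lemma monotoneOn_mul_exp_sq : MonotoneOn (fun b => √(π / 2) * b * exp (b ^ 2 / 2)) (Ici 0) := by
  intro a (ha : 0 ≤ a) c (hc : 0 ≤ c) hac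
  have : exp (a ^ 2 / 2) ≤ exp (c ^ 2 / 2) := exp_le_exp.2 (by nlinarith)
  dsimp only
  gcongr

theorem stmt_7 (l : ℝ) (hl : 0 < l) (b : ℕ → ℝ)
    (hb : ∀ n : ℕ, 1 ≤ n → 0 < b n ∧
      Real.sqrt (Real.pi / 2) * b n * Real.exp ((b n) ^ 2 / 2) = n)
    (x : ℝ) :
    Tendsto (fun n : ℕ => (n : ℝ) * (1 - snCdf l ((b n)⁻¹ * x + b n))) atTop
      (nhds (Real.exp (-x))) := by
  have hnorm : ∀ᶠ n in atTop, √(π / 2) * b n * exp (b n ^ 2 / 2) = n :=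
    (eventually_ge_atTop 1).mono fun n hn => (hb n hn).2
  have hb_top : Tendsto b atTop atTop :=
    tendsto_atTop_of_monotoneOn_comp monotoneOn_mul_exp_sq
      ((eventually_ge_atTop 1).mono fun n hn => (hb n hn).1.le)
      (tendsto_natCast_atTop_atTop.congr' (hnorm.mono fun _ h => h.symm))
  refine ((tendsto_mul_one_sub_snCdf hl x).comp hb_top).congr' ?_
  filter_upwards [hnorm] with n hn
  rw [Function.comp_apply, hn]
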